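/- For the gamma frailty Weibull competing risks model, the sub-survivor function satisfies $\overline{G}(j,t) = \int_t^\infty \frac{\gamma}{\eta_j}\left(\frac{s}{\eta_j}\right)^{\gamma-1}\left[1+\nu\sum_{j'=1}^J\left(\frac{s}{\eta_{j'}}\right)^\gamma\right]^{-1/\nu-1} ds = \frac{1}{\sum_{j'=1}^J (\eta_j/\eta_{j'})^\gamma}\left[1+\nu\sum_{j'=1}^J\left(\frac{t}{\eta_{j'}}\right)^\gamma\right]^{-1/\nu}$ for all $t \geq 0$. -/

import Mathlib

/-! Since `∑ j', (s / η j') ^ γ = S s ^ γ` with `S = ∑ j', η j'⁻ᵞ`, the integrand is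
`η j⁻ᵞ γ s ^ (γ - 1) (1 + ν S s ^ γ) ^ (-1/ν - 1)`, the derivative of
`-(η j ^ γ S)⁻¹ (1 + ν S s ^ γ) ^ (-1/ν)`, which vanishes at infinity. -/

open MeasureTheory Filter Real Set Topology

section

variable {a γ p : ℝ}

lemma hasDerivAt_one_add_mul_rpow_rpow (ha : 0 ≤ a) {s : ℝ} (hs : 0 < s) :
    HasDerivAt (fun x => (1 + a * x ^ γ) ^ p)
      (a * (γ * s ^ (γ - 1)) * p * (1 + a * s ^ γ) ^ (p - 1)) s := by
  have hbase : 1 + a * s ^ γ ≠ 0 := by positivity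
  exact (((hasDerivAt_rpow_const (Or.inl hs.ne')).const_mul a).const_add 1).rpow_const
    (Or.inl hbase)

lemma tendsto_one_add_mul_rpow_rpow_neg_atTop (ha : 0 < a) (hγ : 0 < γ) (hp : 0 < p) :
    Tendsto (fun x : ℝ => (1 + a * x ^ γ) ^ (-p)) atTop (𝓝 0) :=
  (tendsto_rpow_neg_atTop hp).comp <|
    tendsto_atTop_add_const_left _ 1 ((tendsto_rpow_atTop hγ).const_mul_atTop ha)

theorem integral_Ioi_rpow_mul_one_add_mul_rpow (ha : 0 < a) (hγ : 0 < γ) (hp : 0 < p)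
    {t : ℝ} (ht : 0 ≤ t) :
    ∫ s in Ioi t, γ * s ^ (γ - 1) * (1 + a * s ^ γ) ^ (-p - 1)
      = (a * p)⁻¹ * (1 + a * t ^ γ) ^ (-p) := by
  set F : ℝ → ℝ := fun s => -(a * p)⁻¹ * (1 + a * s ^ γ) ^ (-p)
  have hcont : ContinuousWithinAt F (Ici t) t := by
    have hbase : 1 + a * t ^ γ ≠ 0 := by positivity
    exact (((continuousAt_rpow_const _ _ (Or.inr hγ.le)).const_mul a).const_add 1
      |>.rpow_const (Or.inl hbase) |>.const_mul _).continuousWithinAt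
  have hderiv : ∀ s ∈ Ioi t,
      HasDerivAt F (γ * s ^ (γ - 1) * (1 + a * s ^ γ) ^ (-p - 1)) s := by
    intro s hs
    refine ((hasDerivAt_one_add_mul_rpow_rpow ha.le (ht.trans_lt hs)).const_mul _).congr_deriv ?_
    field_simp
  have hnonneg : ∀ s ∈ Ioi t, 0 ≤ γ * s ^ (γ - 1) * (1 + a * s ^ γ) ^ (-p - 1) := by
    intro s hs
    have hs : 0 ≤ s := ht.trans hs.le
    positivity
  have hlim : Tendsto F atTop (𝓝 0) := by
    simpa [F] using (tendsto_one_add_mul_rpow_rpow_neg_atTop ha hγ hp).const_mul (-(a * p)⁻¹)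
  rw [integral_Ioi_of_hasDerivAt_of_nonneg hcont hderiv hnonneg hlim]
  simp [F]

end

lemma Finset.sum_div_rpow_eq_rpow_mul_sum {ι : Type*} (s : Finset ι) {η : ι → ℝ} {x γ : ℝ}
    (hη : ∀ i, 0 ≤ η i) (hx : 0 ≤ x) :
    ∑ i ∈ s, (x / η i) ^ γ = x ^ γ * ∑ i ∈ s, (η i ^ γ)⁻¹ := by
  rw [Finset.mul_sum]
  exact Finset.sum_congr rfl fun i _ => by rw [div_rpow hx (hη i), div_eq_mul_inv]

lemma div_mul_div_rpow_sub_one {η x γ : ℝ} (hη : 0 < η) (hx : 0 ≤ x) :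
    γ / η * (x / η) ^ (γ - 1) = (η ^ γ)⁻¹ * (γ * x ^ (γ - 1)) := by
  rw [div_rpow hx hη.le, rpow_sub_one hη.ne']
  have : η ^ γ ≠ 0 := (rpow_pos_of_pos hη γ).ne'
  field_simp

/-- The sub-survivor function of the gamma frailty Weibull competing risks
model: the integral of the sub-density over `(t, ∞)` has the stated closed form. -/
theorem stmt2 (J : ℕ) (η : Fin J → ℝ) (γ ν : ℝ)
    (hη : ∀ j, 0 < η j) (hγ : 0 < γ) (hν : 0 < ν) (j : Fin J) (t : ℝ) (ht : 0 ≤ t) :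
    ∫ s in Set.Ioi t,
        γ / η j * (s / η j) ^ (γ - 1) * (1 + ν * ∑ j', (s / η j') ^ γ) ^ (-1 / ν - 1)
      = (1 / ∑ j', (η j / η j') ^ γ) * (1 + ν * ∑ j', (t / η j') ^ γ) ^ (-1 / ν) := by
  set S := ∑ j', (η j' ^ γ)⁻¹
  have hS : 0 < S :=
    Finset.sum_pos (fun i _ => inv_pos.mpr (rpow_pos_of_pos (hη i) γ)) ⟨j, Finset.mem_univ j⟩
  have hsum : ∀ x, 0 ≤ x → ∑ j', (x / η j') ^ γ = x ^ γ * S := fun x hx =>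
    Finset.sum_div_rpow_eq_rpow_mul_sum _ (fun i => (hη i).le) hx
  have hintegrand : ∀ s ∈ Ioi t,
      γ / η j * (s / η j) ^ (γ - 1) * (1 + ν * ∑ j', (s / η j') ^ γ) ^ (-1 / ν - 1)
        = (η j ^ γ)⁻¹ * (γ * s ^ (γ - 1) * (1 + ν * S * s ^ γ) ^ (-(1 / ν) - 1)) := by
    intro s hs
    have hs : 0 ≤ s := ht.trans hs.le
    rw [div_mul_div_rpow_sub_one (hη j) hs, hsum s hs, neg_div]
    ring_nf
  rw [setIntegral_congr_fun measurableSet_Ioi hintegrand, integral_const_mul,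
    integral_Ioi_rpow_mul_one_add_mul_rpow (by positivity) hγ (by positivity) ht,
    hsum t ht, hsum (η j) (hη j).le, neg_div]
  have : η j ^ γ ≠ 0 := (rpow_pos_of_pos (hη j) γ).ne'
  field_simp
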